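/- arXiv:1711.06362 — 2 statements merged into one kernel-verified Lean document; each statement's English description precedes it below -/
import Mathlib

section
/- Lexicographic symmetry breaking preserves satisfiability: let φ be a Boolean formula over variables x_1,…,x_n and let π be a permutation of the literals induced by a permutation of the variables (possibly with negations) such that for every assignment δ, δ satisfies φ if and only if δ ∘ π satisfies φ. Define E_0 = ⊤ and E_k = ⋀_{j=1}^{k} (x_j ↔ π(x_j)). Then φ is satisfiable if and only if φ ∧ ⋀_{i=0}^{n-1} (E_i → (x_{i+1} → π(x_{i+1}))) is satisfiable. -/
/-- The assignment `δ ∘ π` induced by a literal permutation `π` given by a variable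
permutation `σ` together with negation flags `ν`: the value of `δ ∘ π` at `x_i` is the
value under `δ` of the literal `π(x_i)`, namely `δ(x_{σ i})` negated iff `ν i`. -/
def permAct (n : ℕ) (σ : Equiv.Perm (Fin n)) (ν : Fin n → Bool)
    (δ : Fin n → Bool) : Fin n → Bool :=
  fun i => xor (δ (σ i)) (ν i)

/-- Lexicographic symmetry breaking preserves satisfiability: if `π` is a symmetry of
`φ` (i.e. `δ ⊨ φ ↔ δ ∘ π ⊨ φ` for all assignments `δ`), then `φ` is satisfiable iff
`φ` together with the lexicographic constraints
`⋀_{i=0}^{n-1} (E_i → (x_{i+1} → π(x_{i+1})))`, where `E_i = ⋀_{j≤i} (x_j ↔ π(x_j))`,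
is satisfiable. -/
theorem stmt_4 (n : ℕ) (φ : (Fin n → Bool) → Prop)
    (σ : Equiv.Perm (Fin n)) (ν : Fin n → Bool)
    (hsym : ∀ δ, φ δ ↔ φ (permAct n σ ν δ)) :
    (∃ δ, φ δ) ↔
      (∃ δ, φ δ ∧ ∀ i : Fin n, (∀ j : Fin n, j < i → δ j = permAct n σ ν δ j) →
        (δ i = true → permAct n σ ν δ i = true)) := by
  constructor
  · rintro ⟨δ₀, hδ₀⟩
    have hne : ∃ d : Lex (Fin n → Bool), φ (ofLex d) := ⟨toLex δ₀, hδ₀⟩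
    have hfin : Finite (Lex (Fin n → Bool)) :=
      Finite.of_equiv _ (toLex : (Fin n → Bool) ≃ _)
    obtain ⟨d, hd, hmin⟩ :=
      (Finite.to_wellFoundedLT (α := Lex (Fin n → Bool))).wf.has_min
        {d | φ (ofLex d)} hne
    refine ⟨ofLex d, hd, ?_⟩
    intro i hagree hi
    by_contra hpi
    have hlt : toLex (permAct n σ ν (ofLex d)) < d := by
      refine ⟨i, fun j hj => (hagree j hj).symm, ?_⟩
      have : permAct n σ ν (ofLex d) i = false := by
        simpa using hpi
      show permAct n σ ν (ofLex d) i < ofLex d i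
      rw [this, hi]
      exact Bool.false_lt_true
    exact hmin _ ((hsym (ofLex d)).mp hd) hlt
  · rintro ⟨δ, hδ, _⟩; exact ⟨δ, hδ⟩
end

section
/- If δ is a satisfying assignment of a Boolean formula φ and π is a symmetry of φ (a literal permutation consistent on complements under which satisfaction is invariant), then the lexicographically minimal assignment in the orbit {δ ∘ π^j : j ≥ 0} of δ under the cyclic group generated by π satisfies both φ and the lexicographic symmetry-breaking constraint ⋀_{i=0}^{n-1} (E_i → (x_{i+1} → π(x_{i+1}))), where E_i = ⋀_{j=1}^{i} (x_j ↔ π(x_j)). -/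
/-- Lexicographic order on assignments, viewed as strings `δ(x_1)…δ(x_n)` with
`false < true`. -/
def lexLE (n : ℕ) (a b : Fin n → Bool) : Prop :=
  a = b ∨ ∃ i : Fin n, (∀ j, j < i → a j = b j) ∧ a i = false ∧ b i = true

/-- If `δ` satisfies `φ` and `π` is a symmetry of `φ`, then the lexicographically
minimal assignment `μ` in the orbit `{δ ∘ π^j : j ≥ 0}` of `δ` satisfies both `φ`
and the lexicographic symmetry-breaking constraint
`⋀_{i=0}^{n-1} (E_i → (x_{i+1} → π(x_{i+1})))` with `E_i = ⋀_{j≤i} (x_j ↔ π(x_j))`. -/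
theorem stmt_5 (n : ℕ) (φ : (Fin n → Bool) → Prop)
    (σ : Equiv.Perm (Fin n)) (ν : Fin n → Bool)
    (hsym : ∀ δ, φ δ ↔ φ (permAct n σ ν δ))
    (δ : Fin n → Bool) (hδ : φ δ) :
    ∃ μ, (∃ j : ℕ, μ = (permAct n σ ν)^[j] δ) ∧
      (∀ j : ℕ, lexLE n μ ((permAct n σ ν)^[j] δ)) ∧
      φ μ ∧
      (∀ i : Fin n, (∀ j : Fin n, j < i → μ j = permAct n σ ν μ j) →
        (μ i = true → permAct n σ ν μ i = true)) := by
  classical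
  haveI : WellFoundedLT (Fin n) := Finite.to_wellFoundedLT
  letI : LinearOrder (Lex (Fin n → Bool)) := inferInstance
  set f := permAct n σ ν with hf
  have hφ : ∀ j, φ (f^[j] δ) := by
    intro j
    induction j with
    | zero => simpa using hδ
    | succ k ih => rw [Function.iterate_succ_apply']; exact (hsym _).mp ih
  obtain ⟨m, ⟨j0, hj0⟩, hmin⟩ :=
    Set.exists_min_image (Set.range fun j : ℕ => toLex (f^[j] δ))
      (id : Lex (Fin n → Bool) → Lex (Fin n → Bool))
      (Set.toFinite _) ⟨toLex δ, 0, rfl⟩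
  have hmin' : ∀ j : ℕ, toLex (f^[j0] δ) ≤ toLex (f^[j] δ) := by
    intro j
    have := hmin _ ⟨j, rfl⟩
    simpa [← hj0] using this
  set μ := f^[j0] δ with hμ
  have key : ∀ j : ℕ, lexLE n μ (f^[j] δ) := by
    intro j
    rcases lt_or_eq_of_le (hmin' j) with h | h
    · obtain ⟨i, hpre, hlt⟩ := h
      exact Or.inr ⟨i, fun j' hj' => hpre j' hj', (Bool.lt_iff.mp hlt).1,
        (Bool.lt_iff.mp hlt).2⟩
    · exact Or.inl (toLex.injective h)
  refine ⟨μ, ⟨j0, rfl⟩, key, hφ j0, ?_⟩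
  intro i hpre hμi
  have hnext : f μ = f^[j0+1] δ := (Function.iterate_succ_apply' f j0 δ).symm
  have hlex : lexLE n μ (f μ) := by rw [hnext]; exact key (j0 + 1)
  rcases hlex with h | ⟨i', hpre', hfalse, htrue⟩
  · rw [← h]; exact hμi
  · rcases lt_trichotomy i i' with hii | hii | hii
    · rw [← hpre' i hii]; exact hμi
    · rw [hii] at hμi; rw [hμi] at hfalse; exact absurd hfalse (by simp)
    · have := hpre i' hii
      rw [hfalse, htrue] at this
      exact absurd this (by simp)
end
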